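/- arXiv:2403.07878 — 2 statements merged into one kernel-verified Lean document; each statement's English description precedes it below -/
import Mathlib

section
/- For any integer t and non-negative integer n: sum_{k=0}^n binom(n,k) * (-1)^k * F_{2n-3k-1+t} / (k+1) = (F_{2n+2+t} - F_t * 2^(n+1)) / (n+1), and the same identity holds with F replaced by L throughout. -/
open Finset

/-- Lucas numbers on naturals. -/
def lucasNat : ℕ → ℤ
  | 0 => 2
  | 1 => 1
  | n + 2 => lucasNat (n + 1) + lucasNat n

/-- Fibonacci numbers extended to integer indices: `F_{-m} = (-1)^(m-1) F_m`. -/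
def fibZ (n : ℤ) : ℤ :=
  if 0 ≤ n then (Nat.fib n.toNat : ℤ) else (-1) ^ ((-n).toNat + 1) * (Nat.fib (-n).toNat : ℤ)

/-- Lucas numbers extended to integer indices: `L_{-m} = (-1)^m L_m`. -/
def lucasZ (n : ℤ) : ℤ :=
  if 0 ≤ n then lucasNat n.toNat else (-1) ^ (-n).toNat * lucasNat (-n).toNat

/-!
Every sequence `u : ℤ → G` with `u (m + 2) = u (m + 1) + u m` satisfies
`u (m - 3) - u m = -2 u (m - 2)`, so the `N`-th forward difference of `u` with step `-3` is
`(-2)^N` times the shift of `u` by `-2N`. Expanding that difference binomially with `N = n + 1`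
at `2n + 2 + t`, and absorbing `1/(k+1)` through `(n + 1) C(n,k) = C(n+1,k+1) (k + 1)`, gives the
identity for every such sequence; the extended Fibonacci and Lucas numbers are two of them.
-/

open fwdDiff

def IsFibonacciLike {G : Type*} [Add G] (u : ℤ → G) : Prop :=
  ∀ m, u (m + 2) = u (m + 1) + u m

namespace IsFibonacciLike

variable {G : Type*} [AddCommGroup G] {u : ℤ → G}

theorem map {H : Type*} [AddCommGroup H] (hu : IsFibonacciLike u) (f : G →+ H) :
    IsFibonacciLike (f ∘ u) := fun m => by simp [hu m]

theorem fwdDiff_neg_three (hu : IsFibonacciLike u) :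
    Δ_[-3] u = (-2 : ℤ) • fun m => u (m + -2) := by
  ext m
  have h1 := hu (m + -3)
  have h2 := hu (m + -2)
  simp only [fwdDiff, Pi.smul_apply]
  ring_nf at h1 h2 ⊢
  rw [h2, h1]
  abel

theorem fwdDiff_neg_three_iter (hu : IsFibonacciLike u) (N : ℕ) (y : ℤ) :
    (Δ_[-3])^[N] u y = (-2 : ℤ) ^ N • u (y - 2 * N) := by
  induction N generalizing y with
  | zero => simp
  | succ N ih =>
    rw [Function.iterate_succ_apply, hu.fwdDiff_neg_three, fwdDiff_iter_const_smul, Pi.smul_apply,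
      fwdDiff_iter_comp_add, ih, smul_smul, pow_succ]
    push_cast
    ring_nf

theorem sum_choose_shift_sub_three (hu : IsFibonacciLike u) (N : ℕ) (y : ℤ) :
    ∑ j ∈ range (N + 1), ((-1 : ℤ) ^ j * N.choose j) • u (y - 3 * j) =
      (2 : ℤ) ^ N • u (y - 2 * N) := by
  have hsign : ∀ j ≤ N, (-1 : ℤ) ^ j = (-1) ^ N * (-1) ^ (N - j) := fun j hj => by
    rw [← pow_add, show N + (N - j) = j + 2 * (N - j) by omega, pow_add, pow_mul, neg_one_sq,
      one_pow, mul_one]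
  calc ∑ j ∈ range (N + 1), ((-1 : ℤ) ^ j * N.choose j) • u (y - 3 * j)
      = (-1 : ℤ) ^ N • ∑ j ∈ range (N + 1), ((-1 : ℤ) ^ (N - j) * N.choose j) • u (y + j • -3) := by
        rw [smul_sum]
        refine sum_congr rfl fun j hj => ?_
        rw [smul_smul, ← mul_assoc, ← hsign j (mem_range_succ_iff.mp hj), nsmul_eq_mul]
        congr 2
        ring
    _ = (-1 : ℤ) ^ N • (-2 : ℤ) ^ N • u (y - 2 * N) := by
        rw [← fwdDiff_iter_eq_sum_shift, hu.fwdDiff_neg_three_iter]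
    _ = (2 : ℤ) ^ N • u (y - 2 * N) := by
        rw [smul_smul, ← mul_pow]
        norm_num

theorem sum_choose_mul_div_succ {K : Type*} [Field K] [CharZero K] {u : ℤ → K}
    (hu : IsFibonacciLike u) (t : ℤ) (n : ℕ) :
    ∑ k ∈ range (n + 1), (n.choose k : K) * (-1) ^ k * u (2 * (n : ℤ) - 3 * k - 1 + t) / (k + 1) =
      (u (2 * n + 2 + t) - u t * 2 ^ (n + 1)) / (n + 1) := by
  have hsum := hu.sum_choose_shift_sub_three (n + 1) (2 * n + 2 + t)
  rw [sum_range_succ', show 2 * n + 2 + t - 2 * ((n + 1 : ℕ) : ℤ) = t by push_cast; ring] at hsum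
  simp only [zsmul_eq_mul, Nat.choose_zero_right, CharP.cast_eq_zero, mul_zero, sub_zero] at hsum
  push_cast at hsum
  have hterm : ∀ k ∈ range (n + 1),
      (n.choose k : K) * (-1) ^ k * u (2 * (n : ℤ) - 3 * k - 1 + t) / (k + 1) * (n + 1) =
        -((-1) ^ (k + 1) * ((n + 1).choose (k + 1) : K) * u (2 * n + 2 + t - 3 * (k + 1))) := by
    intro k _
    have hchoose : ((n : K) + 1) * n.choose k = (n + 1).choose (k + 1) * (k + 1) := by
      exact_mod_cast Nat.add_one_mul_choose_eq n k
    rw [show 2 * n + 2 + t - 3 * (k + 1) = 2 * (n : ℤ) - 3 * k - 1 + t by ring]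
    field_simp
    linear_combination (-1) ^ k * u (2 * (n : ℤ) - 3 * k - 1 + t) * hchoose
  rw [eq_div_iff (Nat.cast_add_one_ne_zero n), sum_mul, sum_congr rfl hterm, sum_neg_distrib]
  linear_combination -hsum

end IsFibonacciLike

theorem fibZ_natCast (k : ℕ) : fibZ k = Nat.fib k := by
  simp [fibZ]

theorem fibZ_neg_natCast (k : ℕ) : fibZ (-k) = (-1) ^ (k + 1) * Nat.fib k := by
  rcases k.eq_zero_or_pos with rfl | hk
  · simp [fibZ]
  · rw [fibZ, if_neg (by omega), neg_neg, Int.toNat_natCast]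

theorem isFibonacciLike_fibZ : IsFibonacciLike fibZ := by
  intro m
  obtain ⟨k, rfl | rfl⟩ := Int.eq_nat_or_neg m
  · rw [show (k : ℤ) + 2 = (k + 2 : ℕ) by push_cast; ring,
      show (k : ℤ) + 1 = (k + 1 : ℕ) by push_cast; ring,
      fibZ_natCast, fibZ_natCast, fibZ_natCast, Nat.fib_add_two]
    push_cast
    ring
  · match k with
    | 0 => simp [fibZ]
    | 1 => simp [fibZ]
    | k + 2 =>
      rw [show -((k + 2 : ℕ) : ℤ) + 2 = -k by push_cast; ring,
        show -((k + 2 : ℕ) : ℤ) + 1 = -(k + 1 : ℕ) by push_cast; ring,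
        fibZ_neg_natCast, fibZ_neg_natCast, fibZ_neg_natCast, Nat.fib_add_two]
      push_cast
      ring

theorem lucasZ_natCast (k : ℕ) : lucasZ k = lucasNat k := by
  simp [lucasZ]

theorem lucasZ_neg_natCast (k : ℕ) : lucasZ (-k) = (-1) ^ k * lucasNat k := by
  rcases k.eq_zero_or_pos with rfl | hk
  · simp [lucasZ]
  · rw [lucasZ, if_neg (by omega), neg_neg, Int.toNat_natCast]

theorem isFibonacciLike_lucasZ : IsFibonacciLike lucasZ := by
  intro m
  obtain ⟨k, rfl | rfl⟩ := Int.eq_nat_or_neg m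
  · rw [show (k : ℤ) + 2 = (k + 2 : ℕ) by push_cast; ring,
      show (k : ℤ) + 1 = (k + 1 : ℕ) by push_cast; ring,
      lucasZ_natCast, lucasZ_natCast, lucasZ_natCast, lucasNat]
  · match k with
    | 0 => simp [lucasZ, lucasNat]
    | 1 => simp [lucasZ, lucasNat]
    | k + 2 =>
      rw [show -((k + 2 : ℕ) : ℤ) + 2 = -k by push_cast; ring,
        show -((k + 2 : ℕ) : ℤ) + 1 = -(k + 1 : ℕ) by push_cast; ring,
        lucasZ_neg_natCast, lucasZ_neg_natCast, lucasZ_neg_natCast, lucasNat]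
      ring

theorem stmt_9 (t : ℤ) (n : ℕ) :
    (∑ k ∈ range (n + 1),
      (n.choose k : ℚ) * (-1) ^ k * (fibZ (2 * (n : ℤ) - 3 * k - 1 + t) : ℚ) / (k + 1) =
      ((fibZ (2 * n + 2 + t) : ℚ) - fibZ t * 2 ^ (n + 1)) / (n + 1)) ∧
    (∑ k ∈ range (n + 1),
      (n.choose k : ℚ) * (-1) ^ k * (lucasZ (2 * (n : ℤ) - 3 * k - 1 + t) : ℚ) / (k + 1) =
      ((lucasZ (2 * n + 2 + t) : ℚ) - lucasZ t * 2 ^ (n + 1)) / (n + 1)) :=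
  ⟨(isFibonacciLike_fibZ.map (Int.castAddHom ℚ)).sum_choose_mul_div_succ t n,
    (isFibonacciLike_lucasZ.map (Int.castAddHom ℚ)).sum_choose_mul_div_succ t n⟩
end

section
/- For any integers r, s, t and non-negative integer n: sum_{k=0}^n binom(n,k) * (-1)^k * F_{r+s}^(k+1) * F_s^(n-k) * F_{s(k+1)+(r+s)(n-k)-t} / (k+1) = (F_s^(n+1) * F_{(r+s)(n+1)-t} + (-1)^((s+1)(n+1)+t) * F_t * F_r^(n+1)) / (n+1). -/
/-
By Binet's formula `F_m = (φ ^ m - ψ ^ m) / √5` the sum splits into a `φ`-part and a `ψ`-part.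
Since `binom(n, k) / (k + 1) = binom(n + 1, k + 1) / (n + 1)`, the part for `x = φ, ψ` is
`-x ^ (-t)` times the binomial expansion of `((u + v) ^ (n + 1) - v ^ (n + 1)) / (n + 1)` with
`u = -F_{r+s} x ^ s` and `v = F_s x ^ (r + s)`. The point is that `u + v = (-1) ^ (s + 1) F_r` does not depend
on the root `x`, so the two `(u + v) ^ (n + 1)` terms recombine into `F_{-t} = (-1) ^ (t + 1) F_t`.
-/

open Finset

open Real goldenRatio

theorem fibZ_eq_intFib (n : ℤ) : fibZ n = Int.fib n := by
  obtain ⟨k, rfl | rfl⟩ := n.eq_nat_or_neg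
  · simp [fibZ]
  · rcases k.eq_zero_or_pos with rfl | _ <;> simp [fibZ, Int.fib_neg_natCast]

theorem coe_fibZ_eq (n : ℤ) : (fibZ n : ℝ) = (φ ^ n - ψ ^ n) / √5 := by
  rw [fibZ_eq_intFib, coe_intFib_eq]

theorem coe_fibZ_neg (n : ℤ) : (fibZ (-n) : ℝ) = (-1) ^ (n + 1) * fibZ n := by
  simpa [fibZ_eq_intFib] using congrArg ((↑) : ℚ → ℝ) (Int.coe_fib_neg n)

theorem fibZ_mul_zpow_add_sub_fibZ_mul_zpow {x : ℝ} (hx : x = φ ∨ x = ψ) (r s : ℤ) :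
    fibZ s * x ^ (r + s) - fibZ (r + s) * x ^ s = (-1) ^ (s + 1) * fibZ r := by
  have hφψ : φ ^ s * ψ ^ s = (-1) ^ s := by rw [← mul_zpow, goldenRatio_mul_goldenConj]
  rcases hx with rfl | rfl <;>
    simp only [coe_fibZ_eq, zpow_add_one₀ (by norm_num : (-1 : ℝ) ≠ 0),
      zpow_add₀ goldenRatio_ne_zero, zpow_add₀ goldenConj_ne_zero] <;>
    linear_combination (ψ ^ r - φ ^ r) / √5 * hφψ

theorem sum_range_choose_div_succ_mul_pow {K : Type*} [Field K] [CharZero K] (u v : K) (n : ℕ) :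
    ∑ k ∈ range (n + 1), (n.choose k : K) / (k + 1) * u ^ (k + 1) * v ^ (n - k) =
      ((u + v) ^ (n + 1) - v ^ (n + 1)) / (n + 1) := by
  rw [eq_div_iff (Nat.cast_add_one_ne_zero n), sum_mul, add_pow,
    sum_range_succ' (fun m => u ^ m * v ^ (n + 1 - m) * _) (n + 1)]
  simp only [pow_zero, one_mul, Nat.choose_zero_right, Nat.cast_one, mul_one, Nat.sub_zero,
    add_sub_cancel_right, Nat.succ_sub_succ]
  refine sum_congr rfl fun k _ => ?_
  have h := Nat.add_one_mul_choose_eq n k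
  have hk : (k : K) + 1 ≠ 0 := Nat.cast_add_one_ne_zero k
  rw [← Nat.cast_inj (R := K)] at h
  push_cast at h
  field_simp
  linear_combination u ^ (k + 1) * v ^ (n - k) * h

theorem sum_range_choose_mul_zpow_div_succ {K : Type*} [Field K] [CharZero K] {x : K} (hx : x ≠ 0)
    (a b : K) (r s t : ℤ) (n : ℕ) :
    ∑ k ∈ range (n + 1), (n.choose k : K) * (-1) ^ k * a ^ (k + 1) * b ^ (n - k) *
        x ^ (s * (k + 1) + (r + s) * ((n : ℤ) - k) - t) / (k + 1) =
      (b ^ (n + 1) * x ^ ((r + s) * (n + 1) - t) -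
        (b * x ^ (r + s) - a * x ^ s) ^ (n + 1) * x ^ (-t)) / (n + 1) := by
  have hsplit : ∀ k ∈ range (n + 1), x ^ (s * (k + 1) + (r + s) * ((n : ℤ) - k) - t) =
      (x ^ s) ^ (k + 1) * (x ^ (r + s)) ^ (n - k) * x ^ (-t) := by
    intro k hk
    rw [show s * ((k : ℤ) + 1) + (r + s) * ((n : ℤ) - k) - t =
        s * ((k + 1 : ℕ) : ℤ) + (r + s) * ((n - k : ℕ) : ℤ) + -t by
      push_cast [Nat.cast_sub (mem_range_succ_iff.mp hk)]; ring]
    rw [zpow_add₀ hx, zpow_add₀ hx, zpow_mul, zpow_mul, zpow_natCast, zpow_natCast]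
  have hlast : x ^ ((r + s) * (n + 1) - t) = (x ^ (r + s)) ^ (n + 1) * x ^ (-t) := by
    rw [sub_eq_add_neg, zpow_add₀ hx, zpow_mul, ← Nat.cast_add_one, zpow_natCast]
  calc _ = -(∑ k ∈ range (n + 1), (n.choose k : K) / (k + 1) * (-a * x ^ s) ^ (k + 1) *
          (b * x ^ (r + s)) ^ (n - k)) * x ^ (-t) := by
        rw [neg_mul, sum_mul, ← sum_neg_distrib]
        refine sum_congr rfl fun k hk => ?_
        rw [hsplit k hk]
        ring
    _ = _ := by
        rw [sum_range_choose_div_succ_mul_pow, hlast]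
        ring

theorem stmt_14 (r s t : ℤ) (n : ℕ) :
    ∑ k ∈ range (n + 1),
      (n.choose k : ℚ) * (-1) ^ k * (fibZ (r + s) : ℚ) ^ (k + 1) * (fibZ s : ℚ) ^ (n - k) *
        (fibZ (s * (k + 1) + (r + s) * ((n : ℤ) - k) - t) : ℚ) / (k + 1) =
    ((fibZ s : ℚ) ^ (n + 1) * (fibZ ((r + s) * (n + 1) - t) : ℚ) +
      (-1) ^ ((s + 1) * ((n : ℤ) + 1) + t) * (fibZ t : ℚ) * (fibZ r : ℚ) ^ (n + 1)) / (n + 1) := by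
  apply Rat.cast_injective (α := ℝ)
  push_cast
  have hφ := sum_range_choose_mul_zpow_div_succ goldenRatio_ne_zero
    (fibZ (r + s) : ℝ) (fibZ s) r s t n
  have hψ := sum_range_choose_mul_zpow_div_succ goldenConj_ne_zero
    (fibZ (r + s) : ℝ) (fibZ s) r s t n
  rw [fibZ_mul_zpow_add_sub_fibZ_mul_zpow (.inl rfl)] at hφ
  rw [fibZ_mul_zpow_add_sub_fibZ_mul_zpow (.inr rfl)] at hψ
  have hneg : (φ ^ (-t) - ψ ^ (-t)) / √5 = (-1) ^ (t + 1) * fibZ t := by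
    rw [← coe_fibZ_neg, coe_fibZ_eq]
  have hsign : ((-1 : ℝ) ^ (s + 1) * fibZ r) ^ (n + 1) * (-1) ^ (t + 1) =
      -((-1) ^ ((s + 1) * ((n : ℤ) + 1) + t) * fibZ r ^ (n + 1)) := by
    rw [mul_pow, ← zpow_natCast, ← zpow_mul, zpow_add_one₀ (by norm_num),
      zpow_add₀ (by norm_num)]
    push_cast
    ring
  calc _ = (∑ k ∈ range (n + 1), (n.choose k : ℝ) * (-1) ^ k * fibZ (r + s) ^ (k + 1) *
            fibZ s ^ (n - k) * φ ^ (s * (k + 1) + (r + s) * ((n : ℤ) - k) - t) / (k + 1) -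
          ∑ k ∈ range (n + 1), (n.choose k : ℝ) * (-1) ^ k * fibZ (r + s) ^ (k + 1) *
            fibZ s ^ (n - k) * ψ ^ (s * (k + 1) + (r + s) * ((n : ℤ) - k) - t) / (k + 1)) /
          √5 := by
        rw [← sum_sub_distrib, sum_div]
        refine sum_congr rfl fun k _ => ?_
        rw [coe_fibZ_eq (s * (k + 1) + (r + s) * ((n : ℤ) - k) - t)]
        ring
    _ = _ := by
        rw [hφ, hψ, coe_fibZ_eq ((r + s) * (n + 1) - t)]
        linear_combination (-((-1 : ℝ) ^ (s + 1) * fibZ r) ^ (n + 1) / (n + 1)) * hneg -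
          (fibZ t : ℝ) / (n + 1) * hsign
end
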